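/- arXiv:1609.07555 — 7 statements merged into one kernel-verified Lean document; each statement's English description precedes it below -/
import Mathlib

section
/- For all real numbers α, β, a, b with 1 ≤ α ≤ β and 1 ≤ a ≤ b, one has (1 − a^{−α})·(1 − b^{−β}) ≤ (1 − a^{−β})·(1 − b^{−α}). -/
/-!
Put `S = a ^ (-α)`, `s = b ^ (-α)` and `r = β / α ≥ 1`, so that `0 < s ≤ S ≤ 1`,
`a ^ (-β) = S ^ r` and `b ^ (-β) = s ^ r`. The inequality becomes
`(1 - s ^ r) / (1 - s) ≤ (1 - S ^ r) / (1 - S)`, i.e. the slope of the secant of the convex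
function `x ↦ x ^ r` through the point `1` increases with the other endpoint.
-/

open Real

lemma one_sub_mul_one_sub_rpow_le {r s S : ℝ} (hr : 1 ≤ r) (hs : 0 ≤ s) (hsS : s ≤ S)
    (hS : S ≤ 1) : (1 - S) * (1 - s ^ r) ≤ (1 - S ^ r) * (1 - s) := by
  rcases hsS.eq_or_lt with rfl | hsS
  · rw [mul_comm]
  rcases hS.eq_or_lt with rfl | hS
  · simp
  have hslope := (convexOn_rpow hr).secant_mono_aux3 (Set.mem_Ici.mpr hs)
    (Set.mem_Ici.mpr zero_le_one) hsS hS
  rw [one_rpow, div_le_div_iff₀ (by linarith) (by linarith)] at hslope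
  linarith

lemma rpow_neg_eq_rpow_neg_rpow_div {x : ℝ} (hx : 0 ≤ x) {α : ℝ} (hα : α ≠ 0) (β : ℝ) :
    x ^ (-β) = (x ^ (-α)) ^ (β / α) := by
  rw [← rpow_mul hx, neg_mul, mul_div_cancel₀ β hα]

theorem stmt_0 (α β a b : ℝ) (hα : 1 ≤ α) (hαβ : α ≤ β) (ha : 1 ≤ a) (hab : a ≤ b) :
    (1 - a ^ (-α)) * (1 - b ^ (-β)) ≤ (1 - a ^ (-β)) * (1 - b ^ (-α)) := by
  have hα0 : 0 < α := by linarith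
  have ha0 : 0 < a := by linarith
  rw [rpow_neg_eq_rpow_neg_rpow_div ha0.le hα0.ne' β,
    rpow_neg_eq_rpow_neg_rpow_div (ha0.trans_le hab).le hα0.ne' β]
  exact one_sub_mul_one_sub_rpow_le ((one_le_div hα0).mpr hαβ)
    (rpow_nonneg (ha0.trans_le hab).le _) (rpow_le_rpow_of_nonpos ha0 hab (by linarith))
    (rpow_le_one_of_one_le_of_nonpos ha (by linarith))
end

section
/- For all real numbers x, α, β with x ≥ 1 and 1 ≤ α ≤ β, one has α·x^β − β·x^α + β − α ≥ 0. -/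
/-! With `y = x ^ α` and `p = β / α ≥ 1` we have `x ^ β = y ^ p`, and Bernoulli's inequality
`y ^ p ≥ 1 + p (y - 1)`, multiplied by `α`, is the claim. -/

theorem Real.add_mul_rpow_sub_one_le_mul_rpow {x α β : ℝ} (hx : 0 ≤ x) (hα : 0 < α)
    (hαβ : α ≤ β) : α + β * (x ^ α - 1) ≤ α * x ^ β := by
  set y := x ^ α
  have hp : 1 ≤ β / α := (one_le_div hα).mpr hαβ
  have bernoulli : 1 + β / α * (y - 1) ≤ y ^ (β / α) := by
    simpa using one_add_mul_self_le_rpow_one_add (s := y - 1)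
      (by linarith [Real.rpow_nonneg hx α]) hp
  have hxβ : x ^ β = y ^ (β / α) := by
    rw [← Real.rpow_mul hx, mul_div_cancel₀ β hα.ne']
  calc α + β * (y - 1) = α * (1 + β / α * (y - 1)) := by field_simp
    _ ≤ α * x ^ β := by rw [hxβ]; gcongr

theorem stmt_2 (x α β : ℝ) (hx : 1 ≤ x) (hα : 1 ≤ α) (hαβ : α ≤ β) :
    α * x ^ β - β * x ^ α + β - α ≥ 0 := by
  have := Real.add_mul_rpow_sub_one_le_mul_rpow (x := x) (by linarith) (by linarith) hαβ
  linarith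
end

section
/- For all real numbers α, β, a, b with 1 ≤ α ≤ β and 1 ≤ a ≤ b, one has (a − a^{−α})·(b − b^{−β}) ≤ (a − a^{−β})·(b − b^{−α}). -/
/-!
Multiplying both sides by `a ^ β * b ^ β` and putting `y = a ^ (1 + β)`, `z = b ^ (1 + β)` and
`q = (β - α) / (1 + β) ∈ [0, 1]` turns the inequality into
`(y - y ^ q) * (z - 1) ≤ (y - 1) * (z - z ^ q)` for `1 ≤ y ≤ z`, which says that the slope of the
concave function `t ↦ t ^ q` on the chord from `1` to `y` is at least its slope on the chord from
`1` to `z`.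
-/

open Real Set

lemma rpow_secant_from_one_antitone {q y z : ℝ} (hq₀ : 0 ≤ q) (hq₁ : q ≤ 1) (hy : 1 ≤ y)
    (hyz : y ≤ z) : (y - y ^ q) * (z - 1) ≤ (y - 1) * (z - z ^ q) := by
  rcases hy.eq_or_lt with rfl | hy
  · simp
  have hz : 1 < z := hy.trans_le hyz
  have hslope : (z ^ q - 1) / (z - 1) ≤ (y ^ q - 1) / (y - 1) := by
    have h := (concaveOn_rpow hq₀ hq₁).slope_anti (mem_Ici.2 zero_le_one)
      ⟨mem_Ici.2 (by linarith), hy.ne'⟩ ⟨mem_Ici.2 (by linarith), hz.ne'⟩ hyz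
    simpa only [slope_def_field, one_rpow] using h
  rw [div_le_div_iff₀ (by linarith) (by linarith)] at hslope
  linear_combination hslope

lemma rpow_sub_mul_le {a b c d : ℝ} (ha : 1 ≤ a) (hab : a ≤ b) (hc : 0 ≤ c) (hcd : c ≤ d) :
    (a ^ d - a ^ c) * (b ^ d - 1) ≤ (a ^ d - 1) * (b ^ d - b ^ c) := by
  rcases hc.trans hcd |>.eq_or_lt with rfl | hd
  · simp [le_antisymm hcd hc]
  have hpow {x : ℝ} (hx : 0 ≤ x) : (x ^ d) ^ (c / d) = x ^ c := by
    rw [← rpow_mul hx, mul_div_cancel₀ c hd.ne']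
  rw [← hpow (by linarith), ← hpow (by linarith)]
  exact rpow_secant_from_one_antitone (div_nonneg hc hd.le) ((div_le_one hd).2 hcd)
    (one_le_rpow ha hd.le) (rpow_le_rpow (by linarith) hab hd.le)

lemma sub_rpow_neg_eq {x : ℝ} (hx : 0 < x) (s t : ℝ) :
    x - x ^ (-t) = x ^ (-s) * (x ^ (1 + s) - x ^ (s - t)) := by
  rw [mul_sub, ← rpow_add hx, ← rpow_add hx, show -s + (1 + s) = 1 by ring,
    show -s + (s - t) = -t by ring, rpow_one]

theorem stmt_3 (α β a b : ℝ) (hα : 1 ≤ α) (hαβ : α ≤ β) (ha : 1 ≤ a) (hab : a ≤ b) :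
    (a - a ^ (-α)) * (b - b ^ (-β)) ≤ (a - a ^ (-β)) * (b - b ^ (-α)) := by
  have ha₀ : 0 < a := by linarith
  have hb₀ : 0 < b := by linarith
  simp only [sub_rpow_neg_eq ha₀ β, sub_rpow_neg_eq hb₀ β, sub_self, rpow_zero]
  have key := rpow_sub_mul_le ha hab (sub_nonneg.2 hαβ) (by linarith : β - α ≤ 1 + β)
  calc a ^ (-β) * (a ^ (1 + β) - a ^ (β - α)) * (b ^ (-β) * (b ^ (1 + β) - 1))
      = (a ^ (-β) * b ^ (-β)) * ((a ^ (1 + β) - a ^ (β - α)) * (b ^ (1 + β) - 1)) := by ring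
    _ ≤ (a ^ (-β) * b ^ (-β)) * ((a ^ (1 + β) - 1) * (b ^ (1 + β) - b ^ (β - α))) := by
      gcongr
    _ = a ^ (-β) * (a ^ (1 + β) - 1) * (b ^ (-β) * (b ^ (1 + β) - b ^ (β - α))) := by ring
end

section
/- Let m ≥ 1, let q_1, ..., q_m be real numbers with 1 < q_1 ≤ q_2 ≤ ... ≤ q_m, let α_1, ..., α_m be real numbers with α_i ≥ 1 for all i, and let β_1, ..., β_m be a permutation of α_1, ..., α_m (i.e., β_i = α_{π(i)} for some permutation π of {1,...,m}) satisfying β_1 ≥ β_2 ≥ ... ≥ β_m. Then ∏_{i=1}^m (q_i − q_i^{−α_i}) ≤ ∏_{i=1}^m (q_i − q_i^{−β_i}). -/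
/-!
Both sides are products of factors `q - q ^ (-a) = q * (1 - q ^ (-(a + 1)))`. For `p ≤ r` and
`a ≤ b`, exchanging the exponents of two such factors can only increase their product: with
`x = r ^ (-a) ≤ y = p ^ (-a)` and `λ = b / a ≥ 1`, this is the monotonicity
`(1 - x ^ λ) / (1 - x) ≤ (1 - y ^ λ) / (1 - y)` of the secants through `1` of the convex function
`z ↦ z ^ λ`. Any product of nonnegative factors with this exchange property is maximised by the
antitone arrangement of the exponents: move the largest exponent to the first position by one
exchange and induct on the remaining positions.
-/

open Finset Equiv Set

section Rearrangement

variable {R κ : Type*} [CommSemiring R] [PartialOrder R] [IsOrderedRing R]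

theorem prod_le_prod_comp_swap {ι : Type*} [Fintype ι] [DecidableEq ι] (f : ι → κ → R)
    (α : ι → κ) (a b : ι) (hf : ∀ i, 0 ≤ f i (α i))
    (hab : f a (α a) * f b (α b) ≤ f a (α b) * f b (α a)) :
    ∏ i, f i (α i) ≤ ∏ i, f i (α (swap a b i)) := by
  rcases eq_or_ne a b with rfl | hne
  · simp
  have hpair := subset_univ ({a, b} : Finset ι)
  rw [← prod_sdiff hpair, ← prod_sdiff hpair, prod_pair hne, prod_pair hne, swap_apply_left,
    swap_apply_right]
  have hrest : ∏ i ∈ univ \ {a, b}, f i (α (swap a b i)) = ∏ i ∈ univ \ {a, b}, f i (α i) := by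
    refine prod_congr rfl fun i hi => ?_
    simp only [Finset.mem_sdiff, Finset.mem_insert, Finset.mem_singleton, not_or] at hi
    rw [swap_apply_of_ne_of_ne hi.2.1 hi.2.2]
  rw [hrest]
  exact mul_le_mul_of_nonneg_left hab (prod_nonneg fun i _ => hf i)

theorem prod_le_prod_comp_perm_of_antitone [LinearOrder κ] {n : ℕ} (s : Set κ) (f : Fin n → κ → R)
    (α : Fin n → κ) (π : Perm (Fin n)) (hα : ∀ i, α i ∈ s) (hf : ∀ i, ∀ x ∈ s, 0 ≤ f i x)
    (hswap : ∀ i j, i ≤ j → ∀ x ∈ s, ∀ y ∈ s, x ≤ y → f i x * f j y ≤ f i y * f j x)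
    (hanti : Antitone (α ∘ π)) :
    ∏ i, f i (α i) ≤ ∏ i, f i (α (π i)) := by
  induction n with
  | zero => simp
  | succ n ih =>
    set j := π 0
    have hmax : ∀ k, α k ≤ α j := fun k => by
      simpa using hanti (Fin.zero_le (π.symm k))
    set α' := α ∘ swap 0 j
    have hfirst : ∏ i, f i (α i) ≤ ∏ i, f i (α' i) :=
      prod_le_prod_comp_swap f α 0 j (fun i => hf i _ (hα i))
        (hswap 0 j (Fin.zero_le j) _ (hα 0) _ (hα j) (hmax 0))
    -- `swap 0 j * π` fixes `0`, so it acts on the remaining positions through some `e`.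
    obtain ⟨⟨p, e⟩, he⟩ := Perm.decomposeFin.symm.surjective (swap 0 j * π)
    obtain rfl : p = 0 := by simpa [j] using congr($he 0)
    have hsucc : ∀ i, swap 0 j (e i).succ = π i.succ := fun i => by
      have := congr($he i.succ)
      simp only [Perm.decomposeFin_symm_apply_succ, swap_self, refl_apply, Perm.mul_apply] at this
      rw [this, swap_apply_self]
    have hrest := ih (fun i : Fin n => f i.succ) (α' ∘ Fin.succ) e (fun i => hα _) (fun i => hf _)
      (fun i j hij => hswap _ _ (Fin.succ_le_succ_iff.2 hij))
      (by simpa [Function.comp_def, α', hsucc] using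
        hanti.comp_monotone Fin.strictMono_succ.monotone)
    calc ∏ i, f i (α i) ≤ ∏ i, f i (α' i) := hfirst
      _ = f 0 (α' 0) * ∏ i : Fin n, f i.succ (α' i.succ) := Fin.prod_univ_succ _
      _ ≤ f 0 (α' 0) * ∏ i : Fin n, f i.succ (α' (e i).succ) :=
        mul_le_mul_of_nonneg_left hrest (hf 0 _ (hα _))
      _ = ∏ i, f i (α (π i)) := by simp [Fin.prod_univ_succ, α', hsucc, j]

end Rearrangement

theorem one_sub_rpow_mul_one_sub_le {x y l : ℝ} (hl : 1 ≤ l) (hx : 0 ≤ x) (hxy : x ≤ y)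
    (hy : y < 1) : (1 - x ^ l) * (1 - y) ≤ (1 - y ^ l) * (1 - x) := by
  have h := (convexOn_rpow hl).secant_mono (a := 1) (mem_Ici.2 zero_le_one) hx (hx.trans hxy)
    (by linarith) (by linarith) hxy
  rw [Real.one_rpow, ← neg_div_neg_eq, ← neg_div_neg_eq (y ^ l - 1), neg_sub, neg_sub, neg_sub,
    neg_sub, div_le_div_iff₀ (by linarith) (by linarith)] at h
  linarith

theorem one_sub_rpow_neg_mul_le {p r a b : ℝ} (hp : 1 < p) (hpr : p ≤ r) (ha : 0 < a)
    (hab : a ≤ b) : (1 - p ^ (-a)) * (1 - r ^ (-b)) ≤ (1 - p ^ (-b)) * (1 - r ^ (-a)) := by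
  have hpow : ∀ x : ℝ, 0 < x → x ^ (-b) = (x ^ (-a)) ^ (b / a) := fun x hx => by
    rw [← Real.rpow_mul hx.le]
    congr 1
    field_simp
  have hp0 : 0 < p := by linarith
  rw [hpow p hp0, hpow r (by linarith)]
  have := one_sub_rpow_mul_one_sub_le ((one_le_div ha).2 hab) (Real.rpow_nonneg (hp0.le.trans hpr) (-a))
    (Real.rpow_le_rpow_of_nonpos hp0 hpr (by linarith : -a ≤ 0))
    (Real.rpow_lt_one_of_one_lt_of_neg hp (by linarith))
  linarith

theorem sub_rpow_neg_mul_le {p r s t : ℝ} (hp : 1 < p) (hpr : p ≤ r) (hs : -1 < s)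
    (hst : s ≤ t) : (p - p ^ (-s)) * (r - r ^ (-t)) ≤ (p - p ^ (-t)) * (r - r ^ (-s)) := by
  have hfactor : ∀ x u : ℝ, 0 < x → x - x ^ (-u) = x * (1 - x ^ (-(u + 1))) := fun x u hx => by
    rw [neg_add, Real.rpow_add hx, Real.rpow_neg_one]
    field_simp
  have hp0 : 0 < p := by linarith
  have hr0 : 0 < r := by linarith
  rw [hfactor p s hp0, hfactor p t hp0, hfactor r s hr0, hfactor r t hr0]
  have := one_sub_rpow_neg_mul_le hp hpr (by linarith : 0 < s + 1) (by linarith : s + 1 ≤ t + 1)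
  calc p * (1 - p ^ (-(s + 1))) * (r * (1 - r ^ (-(t + 1))))
      = p * r * ((1 - p ^ (-(s + 1))) * (1 - r ^ (-(t + 1)))) := by ring
    _ ≤ p * r * ((1 - p ^ (-(t + 1))) * (1 - r ^ (-(s + 1)))) :=
      mul_le_mul_of_nonneg_left this (by positivity)
    _ = p * (1 - p ^ (-(t + 1))) * (r * (1 - r ^ (-(s + 1)))) := by ring

theorem stmt_4_general (m : ℕ) (q α β : Fin m → ℝ)
    (hq1 : ∀ i, 1 < q i) (hqmono : Monotone q)
    (hα : ∀ i, 1 ≤ α i)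
    (π : Equiv.Perm (Fin m)) (hβ : ∀ i, β i = α (π i))
    (hβmono : Antitone β) :
    ∏ i, (q i - q i ^ (-α i)) ≤ ∏ i, (q i - q i ^ (-β i)) := by
  obtain rfl : β = α ∘ π := funext hβ
  refine prod_le_prod_comp_perm_of_antitone (Ici 1) (fun i x => q i - q i ^ (-x)) α π hα
    (fun i x hx => ?_) (fun i j hij x hx y _ hxy => ?_) hβmono
  · have hqx : q i ^ (-x) ≤ 1 :=
      Real.rpow_le_one_of_one_le_of_nonpos (hq1 i).le (by linarith [mem_Ici.1 hx])
    linarith [hq1 i]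
  · exact sub_rpow_neg_mul_le (hq1 i) (hqmono hij) (by linarith [mem_Ici.1 hx]) hxy

theorem stmt_4 (m : ℕ) (hm : 1 ≤ m) (q α β : Fin m → ℝ)
    (hq1 : ∀ i, 1 < q i) (hqmono : Monotone q)
    (hα : ∀ i, 1 ≤ α i)
    (π : Equiv.Perm (Fin m)) (hβ : ∀ i, β i = α (π i))
    (hβmono : Antitone β) :
    ∏ i, (q i - q i ^ (-α i)) ≤ ∏ i, (q i - q i ^ (-β i)) :=
  stmt_4_general m q α β hq1 hqmono hα π hβ hβmono
end

section
/- Let m ≥ 1, let q_1 < q_2 < ... < q_m be prime numbers, let α_1, ..., α_m be positive integers, and let β_1, ..., β_m be a permutation of α_1, ..., α_m satisfying β_1 ≥ β_2 ≥ ... ≥ β_m. Then e^γ · log log(∏_{k=1}^m q_k^{α_k}) − ∏_{k=1}^m (q_k − q_k^{−α_k})/(q_k − 1) ≥ e^γ · log log(∏_{k=1}^m p_k^{β_k}) − ∏_{k=1}^m (p_k − p_k^{−β_k})/(p_k − 1). -/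
/-!
Since `(q - q ^ (-a)) / (q - 1) = ∑_{i ≤ a} q⁻ⁱ`, it suffices to show that passing from
`(qₖ, αₖ)` to `(pₖ, βₖ)` does not increase `∏ qₖ ^ αₖ` and does not decrease
`∏ₖ ∑_{i ≤ αₖ} qₖ⁻ⁱ`. Replacing each base by the smaller prime `pₖ ≤ qₖ` is harmless for both.
Sorting the exponents decreasingly against increasing bases is, after taking logarithms, a
rearrangement inequality: the classical one for `∑ βₖ log pₖ`, and for `∑ₖ log ∑_{i ≤ βₖ} pₖ⁻ⁱ`
the version for submodular summands, as `log ∑_{i ≤ a} r⁻ⁱ` has decreasing differences in `(r, a)`.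
-/

open Finset

section Rearrangement

variable {ι κ M : Type*} [LinearOrder ι] [Fintype ι] [Preorder κ]
  [AddCommMonoid M] [PartialOrder M] [IsOrderedAddMonoid M]

theorem sum_apply_perm_le_sum_apply_swap_mul (f : ι → κ → M)
    (hf : ∀ i j a b, i ≤ j → a ≤ b → f i a + f j b ≤ f i b + f j a)
    {β : ι → κ} (hβ : Antitone β) (τ : Equiv.Perm ι) {x : ι}
    (hxτ : x ≤ τ x) (hxτ' : x ≤ τ⁻¹ x) :
    ∑ i, f i (β (τ i)) ≤ ∑ i, f i (β ((Equiv.swap x (τ x) * τ) i)) := by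
  set j := τ⁻¹ x
  have hτj : τ j = x := τ.apply_symm_apply x
  rcases eq_or_ne (τ x) x with hx | hx
  · simp [hx]
  have hjx : x ≠ j := fun h => hx (h ▸ hτj)
  have hrest : ∀ i ∈ ({x, j} : Finset ι)ᶜ,
      f i (β (τ i)) = f i (β ((Equiv.swap x (τ x) * τ) i)) := by
    intro i hi
    simp only [mem_compl, mem_insert, mem_singleton, not_or] at hi
    rw [Equiv.Perm.mul_apply, Equiv.swap_apply_of_ne_of_ne]
    · exact fun h => hi.2 (by rw [← hτj] at h; exact τ.injective h)
    · exact fun h => hi.1 (τ.injective h)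
  rw [← sum_add_sum_compl {x, j}, ← sum_add_sum_compl {x, j} (fun i => f i _),
    sum_congr rfl hrest, sum_pair hjx, sum_pair hjx]
  simp only [Equiv.Perm.mul_apply, Equiv.swap_apply_right, hτj, Equiv.swap_apply_left]
  gcongr ?_ + _
  exact hf x j _ _ hxτ' (hβ hxτ)

/-- Rearrangement inequality for a submodular `f` on `ι × κ`. -/
theorem sum_apply_perm_le_sum_apply (f : ι → κ → M)
    (hf : ∀ i j a b, i ≤ j → a ≤ b → f i a + f j b ≤ f i b + f j a)
    {β : ι → κ} (hβ : Antitone β) (τ : Equiv.Perm ι) :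
    ∑ i, f i (β (τ i)) ≤ ∑ i, f i (β i) := by
  induction h : #τ.support using Nat.strong_induction_on generalizing τ with
  | _ n ih =>
  rcases τ.support.eq_empty_or_nonempty with hτ | hτ
  · simp [Equiv.Perm.support_eq_empty_iff.mp hτ]
  set x := τ.support.min' hτ
  have hx : τ x ≠ x := Equiv.Perm.mem_support.mp (min'_mem _ _)
  -- Swapping at the least moved point `x` fixes `x`, shrinking the support.
  refine (sum_apply_perm_le_sum_apply_swap_mul f hf hβ τ ?_ ?_).trans
    (ih _ (h ▸ Equiv.Perm.card_support_swap_mul hx) _ rfl)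
  · exact min'_le _ _ (Equiv.Perm.apply_mem_support.mpr (min'_mem _ _))
  · exact min'_le _ _
      (Equiv.Perm.support_inv τ ▸ Equiv.Perm.apply_mem_support.mpr (by simpa using hx))

end Rearrangement

section GeomSum

variable {R : Type*} [CommSemiring R] [PartialOrder R] [IsOrderedRing R] {x y : R}

theorem pow_mul_pow_le_pow_mul_pow (hy : 0 ≤ y) (hyx : y ≤ x) {i n : ℕ} (hin : i ≤ n) :
    x ^ i * y ^ n ≤ x ^ n * y ^ i := by
  obtain ⟨d, rfl⟩ := Nat.exists_eq_add_of_le hin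
  have hxy : 0 ≤ x ^ i * y ^ i := mul_nonneg (pow_nonneg (hy.trans hyx) i) (pow_nonneg hy i)
  calc x ^ i * y ^ (i + d) = x ^ i * y ^ i * y ^ d := by ring
    _ ≤ x ^ i * y ^ i * x ^ d := by gcongr
    _ = x ^ (i + d) * y ^ i := by ring

theorem geom_sum_mul_geom_sum_le (hy : 0 ≤ y) (hyx : y ≤ x) {a b : ℕ} (hab : a ≤ b) :
    (∑ i ∈ range a, x ^ i) * ∑ i ∈ range b, y ^ i ≤
      (∑ i ∈ range b, x ^ i) * ∑ i ∈ range a, y ^ i := by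
  obtain ⟨d, rfl⟩ := Nat.exists_eq_add_of_le hab
  rw [sum_range_add, sum_range_add, mul_add, add_mul]
  gcongr _ + ?_
  rw [sum_mul_sum, sum_mul_sum, sum_comm]
  refine sum_le_sum fun _ _ => sum_le_sum fun j hj => ?_
  exact pow_mul_pow_le_pow_mul_pow hy hyx (by simp at hj; omega)

end GeomSum

theorem Real.sub_rpow_neg_div_sub_one {r : ℝ} (hr0 : 0 < r) (hr1 : r ≠ 1) (a : ℕ) :
    (r - r ^ (-(a : ℝ))) / (r - 1) = ∑ i ∈ range (a + 1), r⁻¹ ^ i := by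
  have hinv : r⁻¹ ≠ 1 := inv_ne_one.mpr hr1
  rw [geom_sum_eq hinv, rpow_neg hr0.le, rpow_natCast, pow_succ, inv_pow]
  have : r - 1 ≠ 0 := sub_ne_zero.mpr hr1
  have : r⁻¹ - 1 ≠ 0 := sub_ne_zero.mpr hinv
  field_simp
  ring

theorem Real.log_geom_sum_add_log_geom_sum_le {x y : ℝ} (hy : 0 ≤ y) (hyx : y ≤ x) {a b : ℕ}
    (hab : a ≤ b) :
    log (∑ n ∈ range (a + 1), x ^ n) + log (∑ n ∈ range (b + 1), y ^ n) ≤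
      log (∑ n ∈ range (b + 1), x ^ n) + log (∑ n ∈ range (a + 1), y ^ n) := by
  have hpos : ∀ (z : ℝ) (c : ℕ), 0 ≤ z → 0 < ∑ n ∈ range (c + 1), z ^ n :=
    fun z c hz => geom_sum_pos hz c.succ_ne_zero
  have hx := hy.trans hyx
  rw [← log_mul (hpos _ _ hx).ne' (hpos _ _ hy).ne',
    ← log_mul (hpos _ _ hx).ne' (hpos _ _ hy).ne']
  exact log_le_log (mul_pos (hpos _ _ hx) (hpos _ _ hy))
    (geom_sum_mul_geom_sum_le hy hyx (Nat.succ_le_succ hab))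

theorem Nat.nth_le_of_strictMono_fin {p : ℕ → Prop} {m : ℕ} {q : Fin m → ℕ}
    (hq : StrictMono q) (hp : ∀ k, p (q k)) (k : Fin m) : Nat.nth p k ≤ q k := by
  obtain ⟨n, hn⟩ := k
  induction n with
  | zero => exact Nat.nth_zero ▸ Nat.sInf_le (hp _)
  | succ n ih =>
    by_contra! hlt
    have h1 := Nat.le_nth_of_lt_nth_succ hlt (hp _)
    have h2 := hq (show (⟨n, by omega⟩ : Fin m) < ⟨n + 1, hn⟩ from Nat.lt_add_one n)
    have h3 := ih (by omega)
    simp only at h1 h3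
    omega

theorem Real.prod_le_prod_of_sum_log_le {ι : Type*} [Fintype ι] {u v : ι → ℝ}
    (hu : ∀ i, 0 < u i) (hv : ∀ i, 0 < v i) (h : ∑ i, log (u i) ≤ ∑ i, log (v i)) :
    ∏ i, u i ≤ ∏ i, v i := by
  rwa [← log_le_log_iff (prod_pos fun i _ => hu i) (prod_pos fun i _ => hv i),
    log_prod fun i _ => (hu i).ne', log_prod fun i _ => (hv i).ne']

section ProductInequalities

variable {ι : Type*} [LinearOrder ι] [Fintype ι] {r s : ι → ℝ} {β : ι → ℕ}

theorem Real.prod_pow_le_prod_pow_perm (hr : ∀ i, 0 < r i) (hrs : ∀ i, r i ≤ s i)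
    (hr_mono : Monotone r) (hβ : Antitone β) (τ : Equiv.Perm ι) :
    ∏ i, r i ^ β i ≤ ∏ i, s i ^ β (τ i) := by
  have hβr : Antivary (fun i => (β i : ℝ)) fun i => log (r i) :=
    Antitone.antivary (fun i j h => Nat.cast_le.mpr (hβ h))
      fun i j h => log_le_log (hr i) (hr_mono h)
  calc ∏ i, r i ^ β i ≤ ∏ i, r i ^ β (τ i) := by
        refine prod_le_prod_of_sum_log_le (fun i => pow_pos (hr i) _)
          (fun i => pow_pos (hr i) _) ?_
        simpa only [log_pow, smul_eq_mul] using hβr.sum_smul_le_sum_comp_perm_smul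
    _ ≤ ∏ i, s i ^ β (τ i) :=
        prod_le_prod (fun i _ => (pow_pos (hr i) _).le)
          fun i _ => pow_le_pow_left₀ (hr i).le (hrs i) _

theorem Real.prod_geom_sum_inv_perm_le (hr : ∀ i, 0 < r i) (hrs : ∀ i, r i ≤ s i)
    (hs : Monotone s) (hβ : Antitone β) (τ : Equiv.Perm ι) :
    ∏ i, ∑ n ∈ range (β (τ i) + 1), (s i)⁻¹ ^ n ≤
      ∏ i, ∑ n ∈ range (β i + 1), (r i)⁻¹ ^ n := by
  have hs0 : ∀ i, 0 < s i := fun i => (hr i).trans_le (hrs i)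
  have hpos : ∀ i (a : ℕ), 0 < ∑ n ∈ range (a + 1), (s i)⁻¹ ^ n :=
    fun i a => geom_sum_pos (inv_nonneg.mpr (hs0 i).le) a.succ_ne_zero
  calc ∏ i, ∑ n ∈ range (β (τ i) + 1), (s i)⁻¹ ^ n
      ≤ ∏ i, ∑ n ∈ range (β i + 1), (s i)⁻¹ ^ n := by
        refine prod_le_prod_of_sum_log_le (fun i => hpos i _) (fun i => hpos i _) ?_
        refine sum_apply_perm_le_sum_apply (fun i a => log (∑ n ∈ range (a + 1), (s i)⁻¹ ^ n))
          (fun i j _ _ hij hab => ?_) hβ τ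
        exact log_geom_sum_add_log_geom_sum_le (inv_nonneg.mpr (hs0 j).le)
          (inv_anti₀ (hs0 i) (hs hij)) hab
    _ ≤ ∏ i, ∑ n ∈ range (β i + 1), (r i)⁻¹ ^ n :=
        prod_le_prod (fun i _ => (hpos i _).le) fun i _ => sum_le_sum fun n _ =>
          pow_le_pow_left₀ (inv_nonneg.mpr (hs0 i).le) (inv_anti₀ (hr i) (hrs i)) n

end ProductInequalities

theorem stmt_7 (m : ℕ) (hm : 1 ≤ m) (q : Fin m → ℕ) (α β : Fin m → ℕ)
    (hqprime : ∀ k, (q k).Prime) (hqmono : StrictMono q)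
    (hα : ∀ k, 1 ≤ α k)
    (π : Equiv.Perm (Fin m)) (hβ : ∀ k, β k = α (π k))
    (hβmono : Antitone β) :
    Real.exp Real.eulerMascheroniConstant *
        Real.log (Real.log (∏ k, (q k : ℝ) ^ (α k : ℕ))) -
      ∏ k, ((q k : ℝ) - (q k : ℝ) ^ (-(α k : ℝ))) / ((q k : ℝ) - 1) ≥
    Real.exp Real.eulerMascheroniConstant *
        Real.log (Real.log (∏ k : Fin m, (Nat.nth Nat.Prime k.val : ℝ) ^ (β k : ℕ))) -
      ∏ k : Fin m, ((Nat.nth Nat.Prime k.val : ℝ) - (Nat.nth Nat.Prime k.val : ℝ) ^ (-(β k : ℝ))) /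
        ((Nat.nth Nat.Prime k.val : ℝ) - 1) := by
  set p : Fin m → ℝ := fun k => Nat.nth Nat.Prime k
  have hαβ : ∀ k, α k = β (π⁻¹ k) := fun k => by simp [hβ]
  have hp1 : ∀ k, 1 < p k := fun k => Nat.one_lt_cast.mpr (Nat.prime_nth_prime k).one_lt
  have hp0 : ∀ k, 0 < p k := fun k => zero_lt_one.trans (hp1 k)
  have hq1 : ∀ k, (1 : ℝ) < q k := fun k => Nat.one_lt_cast.mpr (hqprime k).one_lt
  have hpq : ∀ k, p k ≤ q k := fun k =>
    Nat.cast_le.mpr (Nat.nth_le_of_strictMono_fin hqmono hqprime k)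
  have hp : Monotone p := fun i j h => Nat.cast_le.mpr
    ((Nat.nth_strictMono Nat.infinite_setOfPred_prime).monotone (show (i : ℕ) ≤ j from h))
  have hq : Monotone fun k => (q k : ℝ) := fun i j h => Nat.cast_le.mpr (hqmono.monotone h)
  have hNp : 1 < ∏ k, p k ^ β k := by
    have : Nonempty (Fin m) := ⟨⟨0, hm⟩⟩
    simpa using prod_lt_prod_of_nonempty (fun _ _ => one_pos)
      (fun k _ => one_lt_pow₀ (hp1 k) (by rw [hβ]; exact Nat.one_le_iff_ne_zero.mp (hα _)))
      univ_nonempty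
  have hN : ∏ k, p k ^ β k ≤ ∏ k, (q k : ℝ) ^ α k := by
    simpa only [hαβ] using Real.prod_pow_le_prod_pow_perm hp0 hpq hp hβmono π⁻¹
  have hσ : ∏ k, ((q k : ℝ) - (q k : ℝ) ^ (-(α k : ℝ))) / ((q k : ℝ) - 1) ≤
      ∏ k, (p k - p k ^ (-(β k : ℝ))) / (p k - 1) := by
    simp only [fun k => Real.sub_rpow_neg_div_sub_one (zero_lt_one.trans (hq1 k)) (hq1 k).ne',
      fun k => Real.sub_rpow_neg_div_sub_one (hp0 k) (hp1 k).ne', hαβ]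
    exact Real.prod_geom_sum_inv_perm_le hp0 hpq hq hβmono π⁻¹
  rw [ge_iff_le]
  gcongr
  exact Real.log_pos hNp
end

section
/- Fix m ≥ 1 and positive integers α_1, ..., α_m, and for prime numbers q_1 < q_2 < ... < q_m define f(q_1, ..., q_m) = e^γ · log log(∏_{h=1}^m q_h^{α_h}) − ∏_{h=1}^m (q_h − q_h^{−α_h})/(q_h − 1). Then for every choice of primes q_1 < q_2 < ... < q_m one has f(q_1, ..., q_m) ≥ f(p_1, p_2, ..., p_m); that is, the minimum of f over increasing m-tuples of primes is attained at the first m primes (2, 3, 5, ..., p_m). -/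
/-!
The `k`-th of `m` increasing primes is at least `p_k`, and `f` is nondecreasing in each prime:
the factor `(x - x^{-a}) / (x - 1)` is the geometric sum `1 + x⁻¹ + ⋯ + x^{-a}`, hence decreasing
in `x`, while `log log` is increasing on `(1, ∞)`, where the product `∏ q_h^{α_h}` lies.
-/

open Finset Real

theorem Nat.nth_le_of_strictMono {p : ℕ → Prop} {m : ℕ} {s : Fin m → ℕ} (hs : StrictMono s)
    (hp : ∀ k, p (s k)) (k : Fin m) : Nat.nth p k ≤ s k := by
  obtain ⟨k, hk⟩ := k
  induction k with
  | zero => exact Nat.nth_zero (p := p) ▸ Nat.sInf_le (hp _)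
  | succ k ih =>
    have hprev : Nat.nth p k ≤ s ⟨k, by omega⟩ := ih (by omega)
    have hstep : s ⟨k, by omega⟩ < s ⟨k + 1, hk⟩ := hs (Fin.mk_lt_mk.2 k.lt_succ_self)
    by_contra! hlt
    have := Nat.le_nth_of_lt_nth_succ hlt (hp _)
    omega

theorem sub_rpow_neg_div_sub_one_eq_geom_sum {x : ℝ} (hx : 0 < x) (hx1 : x ≠ 1) (a : ℕ) :
    (x - x ^ (-(a : ℝ))) / (x - 1) = ∑ i ∈ range (a + 1), x⁻¹ ^ i := by
  have hinv : x⁻¹ ≠ 1 := by rwa [Ne, inv_eq_one]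
  rw [geom_sum_eq hinv, Real.rpow_neg hx.le, Real.rpow_natCast, inv_pow,
    div_eq_div_iff (sub_ne_zero.2 hx1) (sub_ne_zero.2 hinv)]
  field_simp
  ring

theorem sub_rpow_neg_div_sub_one_nonneg {x : ℝ} (hx : 0 < x) (hx1 : x ≠ 1) (a : ℕ) :
    0 ≤ (x - x ^ (-(a : ℝ))) / (x - 1) := by
  rw [sub_rpow_neg_div_sub_one_eq_geom_sum hx hx1]
  positivity

theorem sub_rpow_neg_div_sub_one_anti {x y : ℝ} (hx : 0 < x) (hx1 : x ≠ 1) (hy1 : y ≠ 1)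
    (hxy : x ≤ y) (a : ℕ) :
    (y - y ^ (-(a : ℝ))) / (y - 1) ≤ (x - x ^ (-(a : ℝ))) / (x - 1) := by
  have hy : 0 < y := hx.trans_le hxy
  rw [sub_rpow_neg_div_sub_one_eq_geom_sum hx hx1, sub_rpow_neg_div_sub_one_eq_geom_sum hy hy1]
  gcongr

theorem Real.log_log_le_log_log {x y : ℝ} (hx : 1 < x) (hxy : x ≤ y) :
    log (log x) ≤ log (log y) :=
  log_le_log (log_pos hx) (log_le_log (by linarith) hxy)

theorem stmt_8 (m : ℕ) (hm : 1 ≤ m) (α : Fin m → ℕ) (hα : ∀ k, 1 ≤ α k)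
    (f : (Fin m → ℕ) → ℝ)
    (hf : ∀ q : Fin m → ℕ, f q =
      Real.exp Real.eulerMascheroniConstant *
          Real.log (Real.log (∏ h, (q h : ℝ) ^ (α h : ℕ))) -
        ∏ h, ((q h : ℝ) - (q h : ℝ) ^ (-(α h : ℝ))) / ((q h : ℝ) - 1))
    (q : Fin m → ℕ) (hqprime : ∀ k, (q k).Prime) (hqmono : StrictMono q) :
    f q ≥ f (fun k => Nat.nth Nat.Prime k.val) := by
  set p : Fin m → ℕ := fun k => Nat.nth Nat.Prime k.val
  have hpprime : ∀ k, (p k).Prime := fun k => Nat.prime_nth_prime k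
  have hpq : ∀ k, (p k : ℝ) ≤ q k := fun k => by
    exact_mod_cast Nat.nth_le_of_strictMono hqmono hqprime k
  have hp1 : ∀ k, 1 < (p k : ℝ) := fun k => by exact_mod_cast (hpprime k).one_lt
  have hq1 : ∀ k, 1 < (q k : ℝ) := fun k => by exact_mod_cast (hqprime k).one_lt
  have hfactors : ∏ h, ((q h : ℝ) - (q h : ℝ) ^ (-(α h : ℝ))) / ((q h : ℝ) - 1) ≤
      ∏ h, ((p h : ℝ) - (p h : ℝ) ^ (-(α h : ℝ))) / ((p h : ℝ) - 1) :=
    prod_le_prod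
      (fun k _ => sub_rpow_neg_div_sub_one_nonneg (by linarith [hq1 k]) (hq1 k).ne' _)
      (fun k _ => sub_rpow_neg_div_sub_one_anti (by linarith [hp1 k]) (hp1 k).ne' (hq1 k).ne'
        (hpq k) _)
  have hnorm : 1 < ∏ h, (p h : ℝ) ^ (α h : ℕ) := by
    have hnat : 1 < ∏ h, p h ^ α h :=
      (one_lt_prod_iff_of_one_le fun k _ => Nat.one_le_pow _ _ (hpprime k).pos).2
        ⟨⟨0, hm⟩, mem_univ _, Nat.one_lt_pow (Nat.one_le_iff_ne_zero.1 (hα _)) (hpprime _).one_lt⟩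
    exact_mod_cast hnat
  have hnorm_le : ∏ h, (p h : ℝ) ^ (α h : ℕ) ≤ ∏ h, (q h : ℝ) ^ (α h : ℕ) :=
    prod_le_prod (fun _ _ => by positivity)
      (fun k _ => pow_le_pow_left₀ (by positivity) (hpq k) _)
  rw [hf, hf, ge_iff_le]
  exact sub_le_sub (mul_le_mul_of_nonneg_left (log_log_le_log_log hnorm hnorm_le)
    (exp_nonneg _)) hfactors
end

section
/- For each m ≥ 1 let α^{(m)}_1 ≥ α^{(m)}_2 ≥ ... ≥ α^{(m)}_m be a nonincreasing m-tuple of positive integers, set n_m = ∏_{k=1}^m p_k^{α^{(m)}_k} and ε_m = (∑_{k=1}^m α^{(m)}_k·log p_k)/(∑_{k=1}^m log p_k) − 1. Define K(m) = min { k ∈ {1,...,m} : α^{(m)}_k ≤ k } when this set is nonempty, and K(m) = m otherwise. If ε_m → 0 as m → ∞, then the set { k ∈ {1,...,m} : α^{(m)}_k ≤ k } is nonempty for all sufficiently large m, and K(m)/m → 0 as m → ∞. -/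
/-!
Write `L k = log p_k` and `D = ∑_{k ≤ m} L k`. Then `ε_m D = ∑_{k ≤ m} (α_k - 1) L k`, a sum of
nonnegative terms. If `α_k > k` for all `k ≤ m`, each term is at least `L k`, so `ε_m ≥ 1`.
Otherwise `α_k ≥ k + 1` for every `k < K(m)`, and since `L k ≥ log 2` these terms alone give
`ε_m D ≥ log 2 · K (K - 1) / 2`. Bertrand's postulate gives `p_k ≤ 2 ^ k`, hence `D ≤ m² log 2`,
and therefore `(K / m)² ≤ 2 ε_m + 1 / m`.
-/

open Finset Filter Topology

namespace Nat

lemma nth_prime_succ_le_two_mul (i : ℕ) : nth Prime (i + 1) ≤ 2 * nth Prime i := by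
  obtain ⟨p, hp, hlt, hle⟩ :=
    exists_prime_lt_and_le_two_mul (nth Prime i) (prime_nth_prime i).ne_zero
  exact (not_lt.1 fun h => (le_nth_of_lt_nth_succ h hp).not_gt hlt).trans hle

lemma nth_prime_le_two_pow (i : ℕ) : nth Prime i ≤ 2 ^ (i + 1) := by
  induction i with
  | zero => simp [nth_prime_zero_eq_two]
  | succ i ih => rw [pow_succ']; exact (nth_prime_succ_le_two_mul i).trans (by omega)

end Nat

lemma log_two_le_log_nth_prime (i : ℕ) : Real.log 2 ≤ Real.log (Nat.nth Nat.Prime i) :=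
  Real.log_le_log two_pos (by exact_mod_cast (Nat.prime_nth_prime i).two_le)

lemma log_nth_prime_le (i : ℕ) : Real.log (Nat.nth Nat.Prime i) ≤ (i + 1) * Real.log 2 :=
  calc Real.log (Nat.nth Nat.Prime i) ≤ Real.log (2 ^ (i + 1)) :=
        Real.log_le_log (by exact_mod_cast (Nat.prime_nth_prime i).pos)
          (by exact_mod_cast Nat.nth_prime_le_two_pow i)
    _ = (i + 1) * Real.log 2 := by rw [Real.log_pow]; push_cast; rfl

lemma sum_log_nth_prime_le (m : ℕ) :
    ∑ k ∈ Icc 1 m, Real.log (Nat.nth Nat.Prime (k - 1)) ≤ Real.log 2 * m ^ 2 :=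
  calc ∑ k ∈ Icc 1 m, Real.log (Nat.nth Nat.Prime (k - 1))
      ≤ ∑ _k ∈ Icc 1 m, m * Real.log 2 := sum_le_sum fun k hk => by
        have hk : ((k - 1 : ℕ) : ℝ) + 1 ≤ m := by
          exact_mod_cast (show k - 1 + 1 ≤ m by grind)
        exact (log_nth_prime_le _).trans
          (mul_le_mul_of_nonneg_right hk (Real.log_nonneg one_le_two))
    _ = Real.log 2 * m ^ 2 := by simp; ring

lemma Finset.sum_Ico_one_natCast {R : Type*} [Field R] [CharZero R] (K : ℕ) :
    ∑ k ∈ Ico 1 K, (k : R) = K * (K - 1) / 2 := by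
  rcases K.eq_zero_or_pos with rfl | hK
  · simp
  have h := sum_range_id_mul_two K
  rw [range_eq_Ico, sum_eq_sum_Ico_succ_bot hK] at h
  have h' := congrArg (Nat.cast (R := R)) h
  push_cast [Nat.cast_sub hK] at h'
  rw [eq_div_iff two_ne_zero, ← h', zero_add]

section WeightedMean

variable {ι : Type*} (s : Finset ι) (a w : ι → ℝ)

lemma le_sum_mul_div_sum {c : ℝ} (hw : ∀ i ∈ s, 0 ≤ w i) (hs : 0 < ∑ i ∈ s, w i)
    (ha : ∀ i ∈ s, c ≤ a i) : c ≤ (∑ i ∈ s, a i * w i) / ∑ i ∈ s, w i := by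
  rw [le_div_iff₀ hs, mul_sum]
  exact sum_le_sum fun i hi => mul_le_mul_of_nonneg_right (ha i hi) (hw i hi)

lemma sum_mul_div_sum_sub_one (hs : ∑ i ∈ s, w i ≠ 0) :
    (∑ i ∈ s, a i * w i) / (∑ i ∈ s, w i) - 1 =
      (∑ i ∈ s, (a i - 1) * w i) / ∑ i ∈ s, w i := by
  simp only [sub_mul, one_mul, sum_sub_distrib, sub_div, div_self hs]

end WeightedMean

section Excess

variable (a : ℕ → ℕ) (w : ℕ → ℝ) {c : ℝ} {m K : ℕ}

lemma lt_of_mem_Ico_min'_filter (h : ((Icc 1 m).filter fun k => a k ≤ k).Nonempty) :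
    ∀ k ∈ Ico 1 (((Icc 1 m).filter fun k => a k ≤ k).min' h), k < a k := by
  intro k hk
  have hmin := mem_Icc.1 (mem_filter.1 (min'_mem _ h)).1
  by_contra! hak
  have hk_mem : k ∈ (Icc 1 m).filter fun k => a k ≤ k :=
    mem_filter.2 ⟨mem_Icc.2 ⟨(mem_Ico.1 hk).1, by grind⟩, hak⟩
  exact (mem_Ico.1 hk).2.not_ge (min'_le _ k hk_mem)

lemma nonempty_filter_le_of_sum_mul_div_sum_lt_two (hc : 0 < c) (hw : ∀ k, c ≤ w k)
    (hm : 1 ≤ m) (h : (∑ k ∈ Icc 1 m, (a k : ℝ) * w k) / (∑ k ∈ Icc 1 m, w k) < 2) :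
    ((Icc 1 m).filter fun k => a k ≤ k).Nonempty := by
  by_contra hempty
  rw [not_nonempty_iff_eq_empty, filter_eq_empty_iff] at hempty
  refine h.not_ge (le_sum_mul_div_sum _ _ _ (fun k _ => hc.le.trans (hw k))
    (sum_pos (fun k _ => hc.trans_le (hw k)) (nonempty_Icc.2 hm)) fun k hk => ?_)
  exact_mod_cast (show 2 ≤ a k by grind)

lemma mul_choose_two_le_sum_sub_one_mul (hc : 0 ≤ c) (hw : ∀ k, c ≤ w k)
    (ha : ∀ k ∈ Icc 1 m, 1 ≤ a k) (hKm : K ≤ m) (haK : ∀ k ∈ Ico 1 K, k < a k) :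
    c * (K * (K - 1) / 2) ≤ ∑ k ∈ Icc 1 m, ((a k : ℝ) - 1) * w k := by
  have hsub : Ico 1 K ⊆ Icc 1 m := Ico_subset_Icc_self.trans (Icc_subset_Icc_right hKm)
  rw [← sum_Ico_one_natCast, mul_sum]
  calc ∑ k ∈ Ico 1 K, c * k ≤ ∑ k ∈ Ico 1 K, ((a k : ℝ) - 1) * w k :=
        sum_le_sum fun k hk => by
          have : (k : ℝ) + 1 ≤ a k := by exact_mod_cast haK k hk
          rw [mul_comm]
          exact mul_le_mul (by linarith) (hw k) hc (by linarith)
    _ ≤ ∑ k ∈ Icc 1 m, ((a k : ℝ) - 1) * w k :=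
        sum_le_sum_of_subset_of_nonneg hsub fun k hk _ => by
          have : (1 : ℝ) ≤ a k := by exact_mod_cast ha k hk
          exact mul_nonneg (by linarith) (hc.trans (hw k))

lemma sq_div_le_of_forall_mem_Ico_lt (hc : 0 < c) (hw : ∀ k, c ≤ w k)
    (hD : ∑ k ∈ Icc 1 m, w k ≤ c * m ^ 2) (hm : 1 ≤ m)
    (ha : ∀ k ∈ Icc 1 m, 1 ≤ a k) (hKm : K ≤ m) (haK : ∀ k ∈ Ico 1 K, k < a k) :
    ((K : ℝ) / m) ^ 2 ≤
      2 * ((∑ k ∈ Icc 1 m, (a k : ℝ) * w k) / (∑ k ∈ Icc 1 m, w k) - 1) + 1 / m := by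
  have hDpos : 0 < ∑ k ∈ Icc 1 m, w k :=
    sum_pos (fun k _ => hc.trans_le (hw k)) (nonempty_Icc.2 hm)
  have hE := mul_choose_two_le_sum_sub_one_mul a w hc.le hw ha hKm haK
  set E := ∑ k ∈ Icc 1 m, ((a k : ℝ) - 1) * w k
  set D := ∑ k ∈ Icc 1 m, w k
  have hm' : (0 : ℝ) < m := by exact_mod_cast hm
  have hKm' : (K : ℝ) ≤ m := by exact_mod_cast hKm
  have hK0 : 0 ≤ (K : ℝ) * (K - 1) := by
    rcases K.eq_zero_or_pos with rfl | hK
    · simp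
    · exact mul_nonneg K.cast_nonneg (sub_nonneg.2 (by exact_mod_cast hK))
  have hε : K * (K - 1) ≤ E / D * (2 * m ^ 2) := by
    rw [← div_le_iff₀ (by positivity)]
    calc (K : ℝ) * (K - 1) / (2 * m ^ 2) = c * (K * (K - 1) / 2) / (c * m ^ 2) := by
          field_simp
      _ ≤ E / (c * m ^ 2) := by gcongr
      _ ≤ E / D :=
          div_le_div_of_nonneg_left ((by positivity : 0 ≤ c * (K * (K - 1) / 2)).trans hE) hDpos hD
  rw [sum_mul_div_sum_sub_one _ _ _ hDpos.ne', div_pow, div_le_iff₀ (by positivity)]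
  calc (K : ℝ) ^ 2 = K * (K - 1) + K := by ring
    _ ≤ E / D * (2 * m ^ 2) + m := by gcongr
    _ = (2 * (E / D) + 1 / m) * m ^ 2 := by field_simp

end Excess

lemma tendsto_zero_of_sq_le {β : Type*} {l : Filter β} {x y : β → ℝ}
    (hxy : ∀ᶠ b in l, x b ^ 2 ≤ y b) (hy : Tendsto y l (𝓝 0)) : Tendsto x l (𝓝 0) :=
  squeeze_zero_norm' (hxy.mono fun _ h => Real.abs_le_sqrt h) (by simpa using hy.sqrt)

open Finset in
theorem stmt_14_general (α : ℕ → ℕ → ℕ)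
    (hαpos : ∀ m k, 1 ≤ k → k ≤ m → 1 ≤ α m k)
    (ε : ℕ → ℝ)
    (hε : ∀ m, ε m =
      (∑ k ∈ Icc 1 m, (α m k : ℝ) * Real.log (Nat.nth Nat.Prime (k - 1))) /
        (∑ k ∈ Icc 1 m, Real.log (Nat.nth Nat.Prime (k - 1))) - 1)
    (K : ℕ → ℕ)
    (hK : ∀ m, K m = if h : ((Icc 1 m).filter (fun k => α m k ≤ k)).Nonempty
      then ((Icc 1 m).filter (fun k => α m k ≤ k)).min' h else m)
    (hε0 : Filter.Tendsto ε Filter.atTop (nhds 0)) :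
    (∀ᶠ m in Filter.atTop, ((Icc 1 m).filter (fun k => α m k ≤ k)).Nonempty) ∧
      Filter.Tendsto (fun m => (K m : ℝ) / (m : ℝ)) Filter.atTop (nhds 0) := by
  have hlog2 : 0 < Real.log 2 := Real.log_pos one_lt_two
  have hsmall : ∀ᶠ m in atTop, 1 ≤ m ∧ ε m < 1 :=
    (eventually_ge_atTop 1).and (hε0.eventually_lt_const one_pos)
  have hne : ∀ m, 1 ≤ m → ε m < 1 → ((Icc 1 m).filter fun k => α m k ≤ k).Nonempty :=
    fun m hm hεm => nonempty_filter_le_of_sum_mul_div_sum_lt_two (α m) _ hlog2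
      (fun k => log_two_le_log_nth_prime _) hm ((sub_lt_iff_lt_add.1 (hε m ▸ hεm)).trans_eq one_add_one_eq_two)
  refine ⟨hsmall.mono fun m h => hne m h.1 h.2,
    tendsto_zero_of_sq_le (y := fun m => 2 * ε m + 1 / m) ?_ ?_⟩
  · filter_upwards [hsmall] with m ⟨hm, hεm⟩
    have hS := hne m hm hεm
    rw [hK m, dif_pos hS, hε m]
    exact sq_div_le_of_forall_mem_Ico_lt (α m) _ hlog2 (fun k => log_two_le_log_nth_prime _)
      (sum_log_nth_prime_le m) hm (fun k hk => hαpos m k (mem_Icc.1 hk).1 (mem_Icc.1 hk).2)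
      (mem_Icc.1 (mem_filter.1 (min'_mem _ hS)).1).2 (lt_of_mem_Ico_min'_filter (α m) hS)
  · simpa using (hε0.const_mul 2).add tendsto_one_div_atTop_nhds_zero_nat

open Finset in
theorem stmt_14 (α : ℕ → ℕ → ℕ)
    (hαpos : ∀ m k, 1 ≤ k → k ≤ m → 1 ≤ α m k)
    (hαmono : ∀ m j k, 1 ≤ j → j ≤ k → k ≤ m → α m k ≤ α m j)
    (n : ℕ → ℕ) (hn : ∀ m, n m = ∏ k ∈ Icc 1 m, Nat.nth Nat.Prime (k - 1) ^ α m k)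
    (ε : ℕ → ℝ)
    (hε : ∀ m, ε m =
      (∑ k ∈ Icc 1 m, (α m k : ℝ) * Real.log (Nat.nth Nat.Prime (k - 1))) /
        (∑ k ∈ Icc 1 m, Real.log (Nat.nth Nat.Prime (k - 1))) - 1)
    (K : ℕ → ℕ)
    (hK : ∀ m, K m = if h : ((Icc 1 m).filter (fun k => α m k ≤ k)).Nonempty
      then ((Icc 1 m).filter (fun k => α m k ≤ k)).min' h else m)
    (hε0 : Filter.Tendsto ε Filter.atTop (nhds 0)) :
    (∀ᶠ m in Filter.atTop, ((Icc 1 m).filter (fun k => α m k ≤ k)).Nonempty) ∧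
      Filter.Tendsto (fun m => (K m : ℝ) / (m : ℝ)) Filter.atTop (nhds 0) :=
  stmt_14_general α hαpos ε hε K hK hε0
end
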